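/- Fix k ≥ 2 and β > 2, and let the variable probabilities be induced by general power-law weights with exponent β. Let c be a single random clause drawn from the random k-SAT model, and let ℓ₁ and ℓ₂ be the literals of c whose variables have the smallest and second-smallest weights, respectively. Then for all variable indices i, j: Pr[|ℓ₁| = i and |ℓ₂| = j] + Pr[|ℓ₁| = j and |ℓ₂| = i] ≤ O((1/n²)·(w_i·w_j)^{1−(1/2)(k−2)(β−2)}), where the implicit constant is independent of i, j, and n. -/

import Mathlib

open Finset Filter
open scoped BigOperators Classical

namespace PLSAT

/-- A clause on `n` variables with `k` literals: each literal is a variable index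
together with a sign (`true` = positive occurrence, `false` = negated). -/
abbrev Clause (n k : ℕ) := Fin k → Fin n × Bool

/-- A CNF formula with `m` clauses, each with `k` literals on `n` variables. -/
abbrev Formula (n m k : ℕ) := Fin m → Clause n k

/-- Assignment `A` satisfies clause `c`. -/
def ClauseSat {n k : ℕ} (A : Fin n → Bool) (c : Clause n k) : Prop :=
  ∃ i, A (c i).1 = (c i).2

/-- Assignment `A` satisfies formula `Φ`. -/
def Sat {n m k : ℕ} (A : Fin n → Bool) (Φ : Formula n m k) : Prop :=
  ∀ j, ClauseSat A (Φ j)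

def Satisfiable {n m k : ℕ} (Φ : Formula n m k) : Prop := ∃ A, Sat A Φ

/-- `p` is a probability vector. -/
def IsProbVec (n : ℕ) (p : Fin n → ℝ) : Prop := (∀ i, 0 ≤ p i) ∧ ∑ i, p i = 1

/-- Normalizing constant: the probability that `k` i.i.d. draws from `p` are pairwise
distinct (sum over ordered injective tuples of the product of probabilities). -/
noncomputable def Z (n k : ℕ) (p : Fin n → ℝ) : ℝ :=
  ∑ v : Fin k → Fin n, if Function.Injective v then ∏ i, p (v i) else 0

/-- Probability of sampling the (ordered, signed) clause `c`: the `k` variables are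
i.i.d. from `p` conditioned on being pairwise distinct, and each sign is uniform. -/
noncomputable def clauseProb (n k : ℕ) (p : Fin n → ℝ) (c : Clause n k) : ℝ :=
  (if Function.Injective (fun i => (c i).1) then ∏ i, p (c i).1 else 0) / (2 ^ k * Z n k p)

/-- Probability of sampling the formula `Φ` (clauses independent). -/
noncomputable def formulaProb (n m k : ℕ) (p : Fin n → ℝ) (Φ : Formula n m k) : ℝ :=
  ∏ j, clauseProb n k p (Φ j)

/-- Probability of the event `P` under the random `k`-SAT model. -/
noncomputable def Pr (n m k : ℕ) (p : Fin n → ℝ) (P : Formula n m k → Prop) : ℝ :=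
  ∑ Φ : Formula n m k, if P Φ then formulaProb n m k p Φ else 0

/-- Smallest weight `w₁` (weights are sorted non-decreasingly). -/
noncomputable def wmin (n : ℕ) (w : Fin n → ℝ) : ℝ :=
  if h : 0 < n then w ⟨0, h⟩ else 0

/-- Largest weight `wₙ`. -/
noncomputable def wmax (n : ℕ) (w : Fin n → ℝ) : ℝ :=
  if h : 0 < n then w ⟨n - 1, Nat.sub_lt h one_pos⟩ else 0

/-- Empirical tail function `F(x) = |{i : wᵢ ≥ x}| / n`. -/
noncomputable def tailF (n : ℕ) (w : Fin n → ℝ) (x : ℝ) : ℝ :=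
  ((Finset.univ.filter fun i => x ≤ w i).card : ℝ) / n

/-- Strict empirical tail function `F^>(x) = |{i : wᵢ > x}| / n`. -/
noncomputable def tailFgt (n : ℕ) (w : Fin n → ℝ) (x : ℝ) : ℝ :=
  ((Finset.univ.filter fun i => x < w i).card : ℝ) / n

/-- The family `w` of weight sequences follows a general power law with exponent `β`
and tail constants `α₁ ≤ α₂`: the weights are sorted non-decreasingly and positive,
`w₁ = Θ(1)`, `wₙ = Θ(n^{1/(β-1)})`, and for all `x ∈ [w₁, wₙ]` it holds
`α₁ x^{1-β} ≤ F(x) ≤ α₂ x^{1-β}`. -/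
structure IsPowerLawFamily (β α₁ α₂ : ℝ) (w : (n : ℕ) → Fin n → ℝ) : Prop where
  mono : ∀ n, Monotone (w n)
  pos : ∀ n i, 0 < w n i
  α₁_pos : 0 < α₁
  α₁_le_α₂ : α₁ ≤ α₂
  wmin_theta : ∃ c₁ c₂ : ℝ, 0 < c₁ ∧ ∀ᶠ n in atTop,
      c₁ ≤ wmin n (w n) ∧ wmin n (w n) ≤ c₂
  wmax_theta : ∃ d₁ d₂ : ℝ, 0 < d₁ ∧ ∀ᶠ n : ℕ in atTop,
      d₁ * (n : ℝ) ^ (1 / (β - 1)) ≤ wmax n (w n) ∧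
      wmax n (w n) ≤ d₂ * (n : ℝ) ^ (1 / (β - 1))
  tail : ∀ n, 0 < n → ∀ x : ℝ, wmin n (w n) ≤ x → x ≤ wmax n (w n) →
      α₁ * x ^ (1 - β) ≤ tailF n (w n) x ∧ tailF n (w n) x ≤ α₂ * x ^ (1 - β)

/-- Probabilities induced by weights: `pᵢ = wᵢ / ∑ⱼ wⱼ`. -/
noncomputable def plp (n : ℕ) (w : Fin n → ℝ) (i : Fin n) : ℝ := w i / ∑ j, w j


/-- The set of variables appearing in the clause `c`. -/
noncomputable def varSet {n k : ℕ} (c : Clause n k) : Finset (Fin n) :=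
  Finset.univ.image fun t => (c t).1

/-- `i` and `j` are the variables of smallest resp. second-smallest weight in `c`
(weights are sorted non-decreasingly in the index, so taking the smallest and
second-smallest *indices* realizes the weight-argmin with ties broken by index). -/
def IsMinPair {n k : ℕ} (c : Clause n k) (i j : Fin n) : Prop :=
  i ∈ varSet c ∧ j ∈ varSet c ∧ i < j ∧
    (∀ t ∈ varSet c, i ≤ t) ∧ (∀ t ∈ varSet c, t ≠ i → j ≤ t)

/-- Probability of an event for a single random clause. -/
noncomputable def PrClause (n k : ℕ) (p : Fin n → ℝ) (P : Clause n k → Prop) : ℝ :=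
  ∑ c : Clause n k, if P c then clauseProb n k p c else 0

/-!
Write `p = plp n w`. If `i < j` are the two lightest variables of a clause, they sit at two
distinct positions `s ≠ t` and every other variable has index `≥ j`; a union bound over `(s, t)`
gives `Pr ≤ k² pᵢ pⱼ (∑_{m ≥ j} pₘ)^{k-2} / Z`. The normaliser `Z` is one minus the collision
probability, which is `O(k² maxₓ pₓ) = O(n^{1/(β-1) - 1}) = o(1)`, so eventually `Z ≥ 1/2`.
The tail bound `F(x) ≤ α₂ x^{1-β}` at `x = wₘ` gives `n - m ≤ α₂ n wₘ^{1-β}`, i.e.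
`wₘ ≤ (α₂ n / (n - m))^{1/(β-1)}`; summing, `∑_{m ≥ j} wₘ = O(n wⱼ^{2-β})`. Since `∑ w ≥ c n`,
this turns into `Pr = O(n⁻² wᵢ wⱼ wⱼ^{-(k-2)(β-2)})`, and `wᵢ ≤ wⱼ` lets us replace
`wⱼ^{-(k-2)(β-2)}` by `(wᵢ wⱼ)^{-(k-2)(β-2)/2}`.
-/

theorem sum_filter_prod_le_sum_prod_sum {κ α ι : Type*} [Fintype κ] [DecidableEq κ] [Fintype α]
    (f : α → ℝ) (hf : ∀ x, 0 ≤ f x) (P : (κ → α) → Prop) [DecidablePred P] (S : Finset ι)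
    (T : ι → κ → Finset α) (hPT : ∀ c, P c → ∃ a ∈ S, c ∈ Fintype.piFinset (T a)) :
    ∑ c with P c, ∏ u, f (c u) ≤ ∑ a ∈ S, ∏ u, ∑ x ∈ T a u, f x := by
  have hg : ∀ c : κ → α, 0 ≤ ∏ u, f (c u) := fun c => prod_nonneg fun u _ => hf _
  calc ∑ c with P c, ∏ u, f (c u)
      ≤ ∑ c with P c, ∑ a ∈ S, if c ∈ Fintype.piFinset (T a) then ∏ u, f (c u) else 0 := by
        refine sum_le_sum fun c hc => ?_
        obtain ⟨a, ha, hca⟩ := hPT c (mem_filter.1 hc).2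
        refine le_trans ?_ (single_le_sum (fun b _ => ?_) ha)
        · rw [if_pos hca]
        · split_ifs <;> simp [hg]
    _ ≤ ∑ c, ∑ a ∈ S, if c ∈ Fintype.piFinset (T a) then ∏ u, f (c u) else 0 :=
        sum_le_sum_of_subset_of_nonneg (filter_subset _ _) fun c _ _ =>
          sum_nonneg fun a _ => by split_ifs <;> simp [hg]
    _ = ∑ a ∈ S, ∏ u, ∑ x ∈ T a u, f x := by
        rw [sum_comm]
        simp_rw [prod_univ_sum, sum_ite_mem, univ_inter]

theorem prod_ite_eq_ite_eq {k : ℕ} {M : Type*} [CommMonoid M] {s t : Fin k} (hst : s ≠ t)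
    (a b c : M) :
    ∏ u, (if u = s then a else if u = t then b else c) = a * b * c ^ (k - 2) := by
  have ht : t ∈ univ.erase s := mem_erase.2 ⟨hst.symm, mem_univ t⟩
  rw [← mul_prod_erase univ _ (mem_univ s), ← mul_prod_erase _ _ ht, if_pos rfl,
    if_neg hst.symm, if_pos rfl, mul_assoc, prod_congr rfl fun u hu => by
      rw [if_neg (ne_of_mem_erase (mem_of_mem_erase hu)), if_neg (ne_of_mem_erase hu)],
    prod_const, card_erase_of_mem ht, card_erase_of_mem (mem_univ s), card_univ,
    Fintype.card_fin, Nat.sub_sub]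

theorem card_offDiag_le_sq {k : ℕ} :
    ((univ : Finset (Fin k)).offDiag.card : ℝ) ≤ (k : ℝ) ^ 2 := by
  rw [offDiag_card, card_univ, Fintype.card_fin, sq]
  exact_mod_cast Nat.sub_le _ _

theorem one_sub_sq_mul_le_Z {n k : ℕ} {p : Fin n → ℝ} (hp : IsProbVec n p) {M : ℝ}
    (hM : ∀ x, p x ≤ M) : 1 - (k : ℝ) ^ 2 * M ≤ Z n k p := by
  obtain ⟨hp0, hp1⟩ := hp
  have hsplit : Z n k p + ∑ v : Fin k → Fin n with ¬ Function.Injective v, ∏ u, p (v u) = 1 := by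
    rw [Z, sum_filter, ← sum_add_distrib, ← one_pow k, ← hp1, Fintype.sum_pow]
    exact sum_congr rfl fun v _ => by split_ifs <;> simp
  have hcoll : ∑ x, p x * p x ≤ M := calc
    ∑ x, p x * p x ≤ ∑ x, M * p x :=
      sum_le_sum fun x _ => mul_le_mul_of_nonneg_right (hM x) (hp0 x)
    _ = M := by rw [← mul_sum, hp1, mul_one]
  set S := (univ : Finset (Fin k)).offDiag ×ˢ (univ : Finset (Fin n))
  set T : (Fin k × Fin k) × Fin n → Fin k → Finset (Fin n) :=
    fun a u => if u = a.1.1 then {a.2} else if u = a.1.2 then {a.2} else univ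
  have hcover : ∀ v : Fin k → Fin n, ¬ Function.Injective v →
      ∃ a ∈ S, v ∈ Fintype.piFinset (T a) := by
    intro v hv
    obtain ⟨s, t, hvst, hst⟩ := Function.not_injective_iff.1 hv
    refine ⟨((s, t), v s), by simp [S, hst], Fintype.mem_piFinset.2 fun u => ?_⟩
    simp only [T]
    split_ifs with hs ht
    · simp [hs]
    · simp [ht, hvst]
    · exact mem_univ _
  have hT : ∀ a ∈ S, ∏ u, ∑ x ∈ T a u, p x = p a.2 * p a.2 := by
    rintro ⟨⟨s, t⟩, x⟩ ha
    simp only [T, apply_ite (fun A : Finset (Fin n) => ∑ x ∈ A, p x), sum_singleton, hp1]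
    rw [prod_ite_eq_ite_eq (mem_offDiag.1 (mem_product.1 ha).1).2.2, one_pow, mul_one]
  have hnoninj := calc ∑ v : Fin k → Fin n with ¬ Function.Injective v, ∏ u, p (v u)
      ≤ ∑ a ∈ S, ∏ u, ∑ x ∈ T a u, p x := sum_filter_prod_le_sum_prod_sum p hp0 _ S T hcover
    _ = (univ : Finset (Fin k)).offDiag.card * ∑ x, p x * p x := by
        simp only [sum_congr rfl hT, S, sum_product, sum_const, nsmul_eq_mul]
    _ ≤ (k : ℝ) ^ 2 * M :=
        mul_le_mul card_offDiag_le_sq hcoll (sum_nonneg fun x _ => mul_self_nonneg _)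
          (by positivity)
  linarith

theorem PrClause_eq_sum_div {n k : ℕ} (p : Fin n → ℝ) (P : Clause n k → Prop) :
    PrClause n k p P = (∑ c with P c ∧ Function.Injective (fun u => (c u).1), ∏ u, p (c u).1)
      / (2 ^ k * Z n k p) := by
  rw [PrClause, sum_filter, sum_div]
  refine sum_congr rfl fun c _ => ?_
  by_cases hP : P c <;> by_cases hc : Function.Injective (fun u => (c u).1) <;>
    simp [clauseProb, hP, hc]

theorem PrClause_isMinPair_eq_zero {n k : ℕ} {p : Fin n → ℝ} {i j : Fin n} (h : ¬ i < j) :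
    PrClause n k p (fun c => IsMinPair c i j) = 0 :=
  sum_eq_zero fun _ _ => if_neg fun hc => h hc.2.2.1

theorem sum_isMinPair_prod_le {n k : ℕ} {p : Fin n → ℝ} (hp0 : ∀ x, 0 ≤ p x) (i j : Fin n) :
    ∑ c : Clause n k with IsMinPair c i j ∧ Function.Injective (fun u => (c u).1),
        ∏ u, p (c u).1
      ≤ (k : ℝ) ^ 2 * (2 ^ k * (p i * p j * (∑ m ∈ Ici j, p m) ^ (k - 2))) := by
  set A : Fin k × Fin k → Fin k → Finset (Fin n) :=
    fun a u => if u = a.1 then {i} else if u = a.2 then {j} else Ici j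
  have hcover : ∀ c : Clause n k, IsMinPair c i j ∧ Function.Injective (fun u => (c u).1) →
      ∃ a ∈ (univ : Finset (Fin k)).offDiag,
        c ∈ Fintype.piFinset fun u => A a u ×ˢ (univ : Finset Bool) := by
    rintro c ⟨⟨hi, hj, hij, -, hmin₂⟩, hinj⟩
    obtain ⟨s, -, hs⟩ := mem_image.1 hi
    obtain ⟨t, -, ht⟩ := mem_image.1 hj
    refine ⟨(s, t), mem_offDiag.2 ⟨mem_univ _, mem_univ _, fun hst => ?_⟩,
      Fintype.mem_piFinset.2 fun u => ?_⟩
    · exact hij.ne (hs.symm.trans ((congrArg (fun u => (c u).1) hst).trans ht))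
    simp only [A, mem_product, mem_univ, and_true]
    split_ifs with hus hut
    · simp [hus, hs]
    · simp [hut, ht]
    · exact mem_Ici.2 (hmin₂ _ (mem_image_of_mem _ (mem_univ u)) fun hui =>
        hus (hinj (hui.trans hs.symm)))
  have hA : ∀ a ∈ (univ : Finset (Fin k)).offDiag,
      ∏ u, ∑ y ∈ A a u ×ˢ (univ : Finset Bool), p y.1
        = 2 ^ k * (p i * p j * (∑ m ∈ Ici j, p m) ^ (k - 2)) := by
    rintro ⟨s, t⟩ hst
    simp only [sum_product, sum_const, card_univ, Fintype.card_bool, nsmul_eq_mul,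
      Nat.cast_ofNat, ← mul_sum, prod_mul_distrib, prod_const, Fintype.card_fin]
    congr 1
    simp only [A, apply_ite (fun S => ∑ x ∈ S, p x), sum_singleton]
    exact prod_ite_eq_ite_eq (mem_offDiag.1 hst).2.2 _ _ _
  have hH : 0 ≤ ∑ m ∈ Ici j, p m := sum_nonneg fun m _ => hp0 m
  calc ∑ c : Clause n k with IsMinPair c i j ∧ Function.Injective (fun u => (c u).1),
        ∏ u, p (c u).1
      ≤ ∑ a ∈ (univ : Finset (Fin k)).offDiag, ∏ u, ∑ y ∈ A a u ×ˢ (univ : Finset Bool), p y.1 :=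
        sum_filter_prod_le_sum_prod_sum (fun y => p y.1) (fun y => hp0 y.1)
          (fun c => IsMinPair c i j ∧ Function.Injective (fun u => (c u).1)) _ _ hcover
    _ = (univ : Finset (Fin k)).offDiag.card *
          (2 ^ k * (p i * p j * (∑ m ∈ Ici j, p m) ^ (k - 2))) := by
        rw [sum_congr rfl hA, sum_const, nsmul_eq_mul]
    _ ≤ _ := mul_le_mul_of_nonneg_right card_offDiag_le_sq
        (mul_nonneg (by positivity) (mul_nonneg (mul_nonneg (hp0 i) (hp0 j)) (pow_nonneg hH _)))

theorem mul_rpow_sub_one_le_rpow_sub_rpow {s r : ℝ} (hs0 : 0 ≤ s) (hs1 : s ≤ 1) (hr : 1 ≤ r) :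
    s * r ^ (s - 1) ≤ r ^ s - (r - 1) ^ s := by
  have hr0 : 0 < r := by linarith
  have hr1 : r⁻¹ ≤ 1 := inv_le_one_of_one_le₀ hr
  have hbernoulli : (1 + -r⁻¹) ^ s ≤ 1 + s * -r⁻¹ :=
    rpow_one_add_le_one_add_mul_self (by linarith) hs0 hs1
  have hfactor : r - 1 = r * (1 + -r⁻¹) := by field_simp; ring
  calc s * r ^ (s - 1) = r ^ s - r ^ s * (1 + s * -r⁻¹) := by
        rw [Real.rpow_sub_one hr0.ne']; ring
    _ ≤ r ^ s - r ^ s * (1 + -r⁻¹) ^ s := by gcongr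
    _ = r ^ s - (r - 1) ^ s := by rw [hfactor, Real.mul_rpow hr0.le (by linarith)]

theorem sum_Icc_rpow_sub_one_le {s : ℝ} (hs0 : 0 < s) (hs1 : s ≤ 1) (R : ℕ) :
    ∑ r ∈ Icc 1 R, (r : ℝ) ^ (s - 1) ≤ (R : ℝ) ^ s / s := by
  induction R with
  | zero => simp [Real.zero_rpow hs0.ne']
  | succ R ih =>
    rw [sum_Icc_succ_top (by omega), le_div_iff₀ hs0, add_mul]
    have hstep := mul_rpow_sub_one_le_rpow_sub_rpow hs0.le hs1
      (by simp : (1 : ℝ) ≤ ((R + 1 : ℕ) : ℝ))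
    rw [le_div_iff₀ hs0] at ih
    push_cast at hstep ⊢
    simp only [add_sub_cancel_right] at hstep
    linarith

theorem Fin.sum_Ici_sub {M : Type*} [AddCommMonoid M] {n : ℕ} (j : Fin n) (f : ℕ → M) :
    ∑ m ∈ Ici j, f (n - m) = ∑ r ∈ Icc 1 (n - j), f r := calc
  ∑ m ∈ Ici j, f (n - m) = ∑ x ∈ (Ici j).map Fin.valEmbedding, f (n - x) :=
      (sum_map (Ici j) Fin.valEmbedding (fun x => f (n - x))).symm
  _ = ∑ r ∈ Icc 1 (n - j), f r := by
      rw [Fin.map_valEmbedding_Ici, sum_Ico_reflect f _ (Nat.le_succ n),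
        show n + 1 - n = 1 by omega, show n + 1 - j = n - j + 1 by omega, Ico_add_one_right_eq_Icc]

theorem le_rpow_inv_of_le_mul_rpow {x d A β : ℝ} (hx : 0 < x) (hd : 0 < d) (hβ : 1 < β)
    (h : d ≤ A * x ^ (1 - β)) : x ≤ (A / d) ^ (β - 1)⁻¹ := by
  have hA : 0 ≤ A / d := by
    have := hd.trans_le h
    have := Real.rpow_pos_of_pos hx (1 - β)
    exact div_nonneg (by nlinarith) hd.le
  rw [Real.le_rpow_inv_iff_of_pos hx.le hA (by linarith), le_div_iff₀ hd]
  calc x ^ (β - 1) * d ≤ x ^ (β - 1) * (A * x ^ (1 - β)) := by gcongr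
    _ = A := by rw [mul_left_comm, ← Real.rpow_add hx]; simp

theorem mul_mul_rpow_neg_le_rpow {a b e : ℝ} (ha : 0 < a) (hab : a ≤ b) (he : 0 ≤ e) :
    a * b * b ^ (-2 * e) ≤ (a * b) ^ (1 - e) := by
  have hb : 0 < b := ha.trans_le hab
  have hab0 : 0 < a * b := mul_pos ha hb
  calc a * b * b ^ (-2 * e) = a * b * (b * b) ^ (-e) := by
        rw [Real.mul_rpow hb.le hb.le, ← Real.rpow_add hb]; ring_nf
    _ ≤ a * b * (a * b) ^ (-e) :=
        mul_le_mul_of_nonneg_left (Real.rpow_le_rpow_of_nonpos hab0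
          (mul_le_mul_of_nonneg_right hab hb.le) (neg_nonpos.2 he)) hab0.le
    _ = (a * b) ^ (1 - e) := by rw [sub_eq_add_neg, Real.rpow_add hab0, Real.rpow_one]

section Weights

variable {n : ℕ} {w : Fin n → ℝ}

theorem wmin_le (hw : Monotone w) (i : Fin n) : wmin n w ≤ w i := by
  rw [wmin, dif_pos i.pos]
  exact hw (Nat.zero_le _)

theorem le_wmax (hw : Monotone w) (i : Fin n) : w i ≤ wmax n w := by
  rw [wmax, dif_pos i.pos]
  exact hw (Nat.le_sub_one_of_lt i.isLt)

theorem mul_natCast_le_sum {c : ℝ} (hc : ∀ i, c ≤ w i) : c * n ≤ ∑ i, w i := by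
  simpa [mul_comm] using card_nsmul_le_sum univ w c fun i _ => hc i

theorem plp_isProbVec (hpos : ∀ i, 0 < w i) (hn : 0 < n) : IsProbVec n (plp n w) := by
  have hW : 0 < ∑ j, w j := sum_pos (fun j _ => hpos j) ⟨⟨0, hn⟩, mem_univ _⟩
  refine ⟨fun i => div_nonneg (hpos i).le hW.le, ?_⟩
  simp only [plp, ← sum_div, div_self hW.ne']

theorem plp_le_div {c : ℝ} (hc0 : 0 < c) (hc : ∀ i, c ≤ w i) (i : Fin n) :
    plp n w i ≤ w i / (c * n) := by
  have hn : (0 : ℝ) < n := by exact_mod_cast i.pos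
  exact div_le_div_of_nonneg_left (hc0.trans_le (hc i)).le (by positivity) (mul_natCast_le_sum hc)

theorem natCast_sub_le_of_tailF_le {α β : ℝ} (hw : Monotone w)
    (htail : ∀ x, wmin n w ≤ x → x ≤ wmax n w → tailF n w x ≤ α * x ^ (1 - β)) (m : Fin n) :
    ((n - m : ℕ) : ℝ) ≤ α * n * w m ^ (1 - β) := by
  have hn : (0 : ℝ) < n := by exact_mod_cast m.pos
  have hcard : n - m ≤ #{x | w m ≤ w x} := by
    rw [← Fin.card_Ici]
    exact card_le_card fun x hx => mem_filter.2 ⟨mem_univ x, hw (mem_Ici.1 hx)⟩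
  calc ((n - m : ℕ) : ℝ) ≤ n * tailF n w (w m) := by
        rw [tailF, mul_div_cancel₀ _ hn.ne']
        exact_mod_cast hcard
    _ ≤ n * (α * w m ^ (1 - β)) := by gcongr; exact htail _ (wmin_le hw m) (le_wmax hw m)
    _ = α * n * w m ^ (1 - β) := by ring

theorem sum_Ici_le_of_tailF_le {α β : ℝ} (hα : 0 < α) (hβ : 2 < β) (hw : Monotone w)
    (hpos : ∀ i, 0 < w i)
    (htail : ∀ x, wmin n w ≤ x → x ≤ wmax n w → tailF n w x ≤ α * x ^ (1 - β)) (j : Fin n) :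
    ∑ m ∈ Ici j, w m ≤ α * (β - 1) / (β - 2) * n * w j ^ (2 - β) := by
  set γ := (β - 1)⁻¹ with hγ
  set s := 1 - γ with hs
  have hβ1 : β - 1 ≠ 0 := by linarith
  have hβ2 : β - 2 ≠ 0 := by linarith
  have hsβ : s = (β - 2) / (β - 1) := by rw [hs, hγ]; field_simp; ring
  have hs0 : 0 < s := by rw [hsβ]; exact div_pos (by linarith) (by linarith)
  have hs1 : s ≤ 1 := by linarith [inv_pos.2 (by linarith : (0 : ℝ) < β - 1)]
  have hA : 0 ≤ α * n := by positivity
  have hbound : ∀ m : Fin n, w m ≤ (α * n) ^ γ * ((n - m : ℕ) : ℝ) ^ (s - 1) := by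
    intro m
    have hd : (0 : ℝ) < (n - m : ℕ) := by exact_mod_cast Nat.sub_pos_of_lt m.isLt
    refine (le_rpow_inv_of_le_mul_rpow (hpos m) hd (by linarith)
      (natCast_sub_le_of_tailF_le hw htail m)).trans_eq ?_
    rw [Real.div_rpow hA hd.le, div_eq_mul_inv, ← Real.rpow_neg hd.le, hs, sub_sub_cancel_left]
  have hcount : ((n - j : ℕ) : ℝ) ^ s ≤ (α * n) ^ s * w j ^ (2 - β) := by
    refine (Real.rpow_le_rpow (by positivity) (natCast_sub_le_of_tailF_le hw htail j)
      hs0.le).trans_eq ?_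
    rw [Real.mul_rpow hA (Real.rpow_nonneg (hpos j).le _), ← Real.rpow_mul (hpos j).le, hsβ]
    congr 2
    field_simp
    ring
  calc ∑ m ∈ Ici j, w m ≤ ∑ m ∈ Ici j, (α * n) ^ γ * ((n - m : ℕ) : ℝ) ^ (s - 1) :=
        sum_le_sum fun m _ => hbound m
    _ = (α * n) ^ γ * ∑ r ∈ Icc 1 (n - j), (r : ℝ) ^ (s - 1) := by
        rw [← mul_sum, Fin.sum_Ici_sub j (fun r => (r : ℝ) ^ (s - 1))]
    _ ≤ (α * n) ^ γ * (((n - j : ℕ) : ℝ) ^ s / s) := by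
        gcongr
        exact sum_Icc_rpow_sub_one_le hs0 hs1 _
    _ ≤ (α * n) ^ γ * ((α * n) ^ s * w j ^ (2 - β) / s) := by gcongr
    _ = α * (β - 1) / (β - 2) * n * w j ^ (2 - β) := by
        rw [← mul_div_assoc, ← mul_assoc, ← Real.rpow_add' hA (by linarith),
          show γ + s = 1 by rw [hs]; ring, Real.rpow_one, hsβ]
        field_simp

theorem PrClause_isMinPair_le {k : ℕ} {α β c : ℝ} (hk : 2 ≤ k) (hβ : 2 < β) (hα : 0 < α)
    (hc0 : 0 < c) (hw : Monotone w) (hpos : ∀ i, 0 < w i) (hc : ∀ i, c ≤ w i)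
    (htail : ∀ x, wmin n w ≤ x → x ≤ wmax n w → tailF n w x ≤ α * x ^ (1 - β))
    (hZ : 1 / 2 ≤ Z n k (plp n w)) {i j : Fin n} (hij : i ≤ j) :
    PrClause n k (plp n w) (fun c => IsMinPair c i j) ≤
      2 * (k : ℝ) ^ 2 * (α * (β - 1) / (β - 2) / c) ^ (k - 2) / c ^ 2 * (1 / (n : ℝ) ^ 2) *
        (w i * w j) ^ (1 - 1 / 2 * ((k : ℝ) - 2) * (β - 2)) := by
  set K := α * (β - 1) / (β - 2)
  set p := plp n w
  set H := ∑ m ∈ Ici j, p m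
  have hn : (0 : ℝ) < n := by exact_mod_cast i.pos
  have hK : 0 < K := div_pos (mul_pos hα (by linarith)) (by linarith)
  have hk2 : (2 : ℝ) ≤ k := by exact_mod_cast hk
  have hp0 : ∀ x, 0 ≤ p x := (plp_isProbVec hpos i.pos).1
  have hpi := hp0 i
  have hpj := hp0 j
  have hwi := hpos i
  have hwj := hpos j
  have hH0 : 0 ≤ H := sum_nonneg fun m _ => hp0 m
  have hH : H ≤ K / c * w j ^ (2 - β) := calc
    H = (∑ m ∈ Ici j, w m) / ∑ m, w m := by simp only [H, p, plp, sum_div]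
    _ ≤ K * n * w j ^ (2 - β) / (c * n) := by
        gcongr
        · exact sum_Ici_le_of_tailF_le hα hβ hw hpos htail j
        · exact mul_natCast_le_sum hc
    _ = K / c * w j ^ (2 - β) := by field_simp
  have hexp : (w j ^ (2 - β)) ^ (k - 2) = w j ^ (-2 * (1 / 2 * ((k : ℝ) - 2) * (β - 2))) := by
    rw [← Real.rpow_natCast, ← Real.rpow_mul (hpos j).le, Nat.cast_sub hk]
    ring_nf
  calc PrClause n k p (fun c => IsMinPair c i j)
      ≤ (k : ℝ) ^ 2 * (2 ^ k * (p i * p j * H ^ (k - 2))) / (2 ^ k * (1 / 2)) := by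
        rw [PrClause_eq_sum_div]
        exact div_le_div₀ (by positivity) (sum_isMinPair_prod_le hp0 i j) (by positivity)
          (by gcongr)
    _ = 2 * (k : ℝ) ^ 2 * (p i * p j * H ^ (k - 2)) := by field_simp
    _ ≤ 2 * (k : ℝ) ^ 2 *
          (w i / (c * n) * (w j / (c * n)) * (K / c * w j ^ (2 - β)) ^ (k - 2)) := by
        gcongr
        · exact plp_le_div hc0 hc i
        · exact plp_le_div hc0 hc j
    _ = 2 * (k : ℝ) ^ 2 * (K / c) ^ (k - 2) / c ^ 2 * (1 / (n : ℝ) ^ 2) *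
          (w i * w j * w j ^ (-2 * (1 / 2 * ((k : ℝ) - 2) * (β - 2)))) := by
        rw [mul_pow, hexp]
        field_simp
    _ ≤ _ := by
        gcongr
        exact mul_mul_rpow_neg_le_rpow hwi (hw hij)
          (mul_nonneg (mul_nonneg (by norm_num) (by linarith)) (by linarith))

end Weights

theorem eventually_half_le_Z {β α₁ α₂ : ℝ} {w : (n : ℕ) → Fin n → ℝ} (hβ : 2 < β)
    (hw : IsPowerLawFamily β α₁ α₂ w) (k : ℕ) :
    ∀ᶠ n in atTop, 1 / 2 ≤ Z n k (plp n (w n)) := by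
  obtain ⟨c, _, hc0, hwmin⟩ := hw.wmin_theta
  obtain ⟨_, d, _, hwmax⟩ := hw.wmax_theta
  set M : ℕ → ℝ := fun n => d * (n : ℝ) ^ (1 / (β - 1)) / (c * n)
  have hγ : 0 < 1 - 1 / (β - 1) := by
    rw [sub_pos, div_lt_one (by linarith)]
    linarith
  have hM : Tendsto (fun n => (k : ℝ) ^ 2 * M n) atTop (nhds 0) := by
    have := ((tendsto_rpow_neg_atTop hγ).comp tendsto_natCast_atTop_atTop).const_mul
      ((k : ℝ) ^ 2 * d / c)
    rw [mul_zero] at this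
    refine this.congr' ?_
    filter_upwards [eventually_gt_atTop 0] with n hn
    have hn : (0 : ℝ) < n := by exact_mod_cast hn
    simp only [Function.comp, M, neg_sub, Real.rpow_sub hn, Real.rpow_one]
    ring
  filter_upwards [hwmin, hwmax, eventually_gt_atTop 0,
    hM.eventually (ge_mem_nhds (by norm_num : (0 : ℝ) < 1 / 2))] with n hmin hmax hn hsmall
  have hc : ∀ i, c ≤ w n i := fun i => hmin.1.trans (wmin_le (hw.mono n) i)
  have hp : ∀ i, plp n (w n) i ≤ M n := fun i =>
    (plp_le_div hc0 hc i).trans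
      (div_le_div_of_nonneg_right ((le_wmax (hw.mono n) i).trans hmax.2) (by positivity))
  linarith [one_sub_sq_mul_le_Z (k := k) (plp_isProbVec (hw.pos n) hn) hp]

/-- For a single random clause from the power-law model, the two
literals `ℓ₁, ℓ₂` of smallest and second-smallest weight satisfy
`Pr[|ℓ₁| = i, |ℓ₂| = j] + Pr[|ℓ₁| = j, |ℓ₂| = i] ≤ O(n⁻²(wᵢwⱼ)^{1-(k-2)(β-2)/2})`,
uniformly in `i`, `j` and `n`. -/
theorem shrunk_clause_distribution (k : ℕ) (hk : 2 ≤ k) (β α₁ α₂ : ℝ) (hβ : 2 < β)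
    (w : (n : ℕ) → Fin n → ℝ) (hw : IsPowerLawFamily β α₁ α₂ w) :
    ∃ C : ℝ, 0 < C ∧ ∀ᶠ n : ℕ in atTop, ∀ i j : Fin n,
      PrClause n k (plp n (w n)) (fun c => IsMinPair c i j) +
        PrClause n k (plp n (w n)) (fun c => IsMinPair c j i) ≤
      C * (1 / (n : ℝ) ^ 2) *
        (w n i * w n j) ^ (1 - 1 / 2 * ((k : ℝ) - 2) * (β - 2)) := by
  obtain ⟨c, _, hc0, hwmin⟩ := hw.wmin_theta
  have hα₂ : 0 < α₂ := hw.α₁_pos.trans_le hw.α₁_le_α₂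
  have hK : 0 < α₂ * (β - 1) / (β - 2) := div_pos (mul_pos hα₂ (by linarith)) (by linarith)
  refine ⟨2 * (k : ℝ) ^ 2 * (α₂ * (β - 1) / (β - 2) / c) ^ (k - 2) / c ^ 2, by positivity, ?_⟩
  filter_upwards [hwmin, eventually_half_le_Z hβ hw k] with n hmin hZ i j
  have hc : ∀ i, c ≤ w n i := fun i => hmin.1.trans (wmin_le (hw.mono n) i)
  have hbound := fun {i j : Fin n} (hij : i ≤ j) => PrClause_isMinPair_le hk hβ hα₂ hc0
    (hw.mono n) (hw.pos n) hc (fun x h₁ h₂ => (hw.tail n i.pos x h₁ h₂).2) hZ hij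
  rcases le_total i j with hij | hji
  · rw [PrClause_isMinPair_eq_zero (not_lt_of_ge hij), add_zero]
    exact hbound hij
  · rw [PrClause_isMinPair_eq_zero (not_lt_of_ge hji), zero_add, mul_comm (w n i)]
    exact hbound hji

end PLSAT
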